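/- For every even natural number g \ge 2 the following four identities hold: 2 D_5(g,1) = 5^{g/2} f_{g-1} + f_{2g+1}; 2 D_5(g,2) = 5^{g/2} f_g + f_{2g}; 2 D_5(g,3) = 5^{g/2} f_g - f_{2g}; 2 D_5(g,4) = 5^{g/2} f_{g-1} - f_{2g+1}. -/

import Mathlib

/-- `binZ n j` is the binomial coefficient `n choose j` for `j : ℤ`, which is `0`
unless `0 ≤ j ≤ n`. -/
def binZ (n : ℕ) (j : ℤ) : ℤ := if 0 ≤ j then (n.choose j.toNat : ℤ) else 0

/-- `catC n j = C(n,j) = binom(n,j) - binom(n,j-1)`. -/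
def catC (n : ℕ) (j : ℤ) : ℤ := binZ n j - binZ n (j - 1)

/-- `dP p n k = d_p(n,k) = ∑_{s ∈ ℤ} C(n, (n+1-k)/2 + s p)` when `k ≡ n+1 (mod 2)`,
and `0` otherwise. -/
noncomputable def dP (p n k : ℕ) : ℤ :=
  if k % 2 = (n + 1) % 2 then ∑ᶠ s : ℤ, catC n (((n : ℤ) + 1 - k) / 2 + s * p) else 0


/-- `DP p g k = D_p(g,k) = ∑_{n=0}^{g} 2^{g-n} (g choose n) d_p(n,k)`. -/
noncomputable def DP (p g k : ℕ) : ℤ :=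
  ∑ n ∈ Finset.range (g + 1), 2 ^ (g - n) * (g.choose n : ℤ) * dP p n k

/-!
The sequence `C(n, ·)` satisfies Pascal's rule and is antisymmetric under `j ↦ n + 1 - j`.
Summing over a residue class mod `p`, this gives `d_p(n+1, k+1) = d_p(n, k) + d_p(n, k+2)` with
`d_p(n, 0) = d_p(n, p) = 0`, and the binomial transform turns it into
`D_p(g+1, ·) = (2 + A) D_p(g, ·)`, where `A` is the adjacency matrix of the path `1 - 2 - ⋯ - (p-1)`.
For `p = 5` the map `2 + A` preserves the splitting into antisymmetric and symmetric parts under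
`k ↦ 5 - k`. On `(D₁ - D₄, D₂ - D₃)` it acts as `[[2,1],[1,1]]`, the square of the Fibonacci
matrix, giving `(f_{2g+1}, f_{2g})`. On `(D₁ + D₄, D₂ + D₃)` it acts as `N = [[2,1],[1,3]]`, and
`N² = 5 [[1,1],[1,2]]`, so after an even number `g` of steps one gets `5^{g/2} (f_{g-1}, f_g)`.
-/

open Finset

lemma binZ_of_neg {n : ℕ} {j : ℤ} (hj : j < 0) : binZ n j = 0 := by
  simp [binZ, not_le.2 hj]

lemma binZ_of_lt {n : ℕ} {j : ℤ} (hj : (n : ℤ) < j) : binZ n j = 0 := by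
  have hj' : n < j.toNat := by omega
  simp [binZ, show 0 ≤ j by omega, Nat.choose_eq_zero_of_lt hj']

lemma binZ_succ (n : ℕ) (j : ℤ) : binZ (n + 1) j = binZ n j + binZ n (j - 1) := by
  rcases lt_trichotomy j 0 with hj | rfl | hj
  · rw [binZ_of_neg hj, binZ_of_neg hj, binZ_of_neg (by omega), add_zero]
  · simp [binZ]
  · obtain ⟨i, rfl⟩ : ∃ i : ℕ, j = i + 1 := ⟨j.toNat - 1, by omega⟩
    simp only [binZ, add_sub_cancel_right, if_pos (by omega : (0 : ℤ) ≤ i + 1),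
      if_pos (Int.natCast_nonneg i), show ((i : ℤ) + 1).toNat = i + 1 by omega, Int.toNat_natCast,
      Nat.choose_succ_succ', Nat.cast_add, add_comm]

lemma binZ_sub (n : ℕ) (j : ℤ) : binZ n (n - j) = binZ n j := by
  rcases lt_or_ge j 0 with hj | hj
  · rw [binZ_of_neg hj, binZ_of_lt (by omega)]
  rcases lt_or_ge (n : ℤ) j with hjn | hjn
  · rw [binZ_of_neg (by omega), binZ_of_lt hjn]
  obtain ⟨i, rfl⟩ : ∃ i : ℕ, j = i := ⟨j.toNat, by omega⟩
  simp only [binZ, if_pos hj, if_pos (by omega : (0 : ℤ) ≤ n - i), Int.toNat_natCast,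
    show ((n : ℤ) - i).toNat = n - i by omega, Nat.choose_symm (by omega : i ≤ n)]

lemma catC_succ (n : ℕ) (j : ℤ) : catC (n + 1) j = catC n j + catC n (j - 1) := by
  simp only [catC, binZ_succ]
  ring

lemma catC_add_one_sub (n : ℕ) (j : ℤ) : catC n (n + 1 - j) = -catC n j := by
  rw [catC, catC, show (n : ℤ) + 1 - j - 1 = n - j by ring,
    show (n : ℤ) + 1 - j = n - (j - 1) by ring, binZ_sub, binZ_sub, neg_sub]

lemma support_catC_subset (n : ℕ) : Function.support (catC n) ⊆ Set.Icc 0 ((n : ℤ) + 1) := by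
  intro j hj
  by_contra hmem
  rw [Set.mem_Icc, not_and_or, not_le, not_le] at hmem
  apply hj
  rcases hmem with hj | hj
  · rw [catC, binZ_of_neg hj, binZ_of_neg (by omega), sub_zero]
  · rw [catC, binZ_of_lt (by omega), binZ_of_lt (by omega), sub_zero]

lemma hasFiniteSupport_catC_comp (n : ℕ) (r : ℤ) {p : ℤ} (hp : p ≠ 0) :
    (fun s : ℤ => catC n (r + s * p)).HasFiniteSupport := by
  have hinj : Function.Injective fun s : ℤ => r + s * p := fun s t hst => by
    simpa [hp] using hst
  exact ((Set.finite_Icc _ _).preimage hinj.injOn).subset fun s hs => support_catC_subset n hs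

lemma finsum_eq_zero_of_comp_eq_neg {α G : Type*} [AddCommGroup G] [IsAddTorsionFree G]
    (e : α ≃ α) {f : α → G} (h : ∀ x, f (e x) = -f x) : ∑ᶠ x, f x = 0 := by
  rw [← self_eq_neg, ← finsum_neg_distrib, ← finsum_comp_equiv e]
  exact finsum_congr h

lemma dP_succ_succ {p : ℕ} (hp : p ≠ 0) (n k : ℕ) :
    dP p (n + 1) (k + 1) = dP p n k + dP p n (k + 2) := by
  unfold dP
  by_cases hk : k % 2 = (n + 1) % 2
  · rw [if_pos (by omega), if_pos hk, if_pos (by omega),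
      ← finsum_add_distrib (hasFiniteSupport_catC_comp _ _ (by omega))
        (hasFiniteSupport_catC_comp _ _ (by omega))]
    refine finsum_congr fun s => ?_
    rw [Nat.cast_add_one, catC_succ]
    congr 2 <;> push_cast <;> omega
  · rw [if_neg (by omega), if_neg hk, if_neg (by omega), add_zero]

lemma dP_zero_right (p n : ℕ) : dP p n 0 = 0 := by
  unfold dP
  split_ifs with hn
  · refine finsum_eq_zero_of_comp_eq_neg (Equiv.neg ℤ) fun s => ?_
    rw [← catC_add_one_sub, Equiv.neg_apply, neg_mul]
    congr 1
    omega
  · rfl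

lemma dP_self_right (p n : ℕ) : dP p n p = 0 := by
  unfold dP
  split_ifs with hn
  · refine finsum_eq_zero_of_comp_eq_neg (Equiv.subLeft 1) fun s => ?_
    rw [← catC_add_one_sub, Equiv.subLeft_apply, sub_mul, one_mul]
    congr 1
    omega
  · rfl

lemma dP_zero_left {p k : ℕ} (hk : 0 < k) (hkp : k < p) :
    dP p 0 k = if k = 1 then 1 else 0 := by
  have hoff : ∀ s : ℤ, s ≠ 0 → catC 0 ((0 + 1 - k) / 2 + s * p) = 0 := fun s hs => by
    refine Function.notMem_support.1 fun hmem => ?_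
    have hsp : s * (p : ℤ) ≤ -p ∨ (p : ℤ) ≤ s * p := by
      rcases lt_or_gt_of_ne hs with h | h
      · left; nlinarith
      · right; nlinarith
    have := support_catC_subset 0 hmem
    rw [Set.mem_Icc] at this
    omega
  unfold dP
  split_ifs with hodd h1
  · subst h1
    rw [finsum_eq_single _ 0 (by exact_mod_cast hoff)]
    simp [catC, binZ]
  · refine finsum_eq_zero_of_forall_eq_zero fun s => ?_
    rcases eq_or_ne s 0 with rfl | hs
    · rw [catC, binZ_of_neg (by omega), binZ_of_neg (by omega), sub_zero]
    · exact_mod_cast hoff s hs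
  · omega
  · rfl

lemma sum_range_pow_mul_choose_succ {R : Type*} [CommSemiring R] (c : R) (f : ℕ → R) (g : ℕ) :
    ∑ n ∈ range (g + 2), c ^ (g + 1 - n) * ((g + 1).choose n : R) * f n =
      c * ∑ n ∈ range (g + 1), c ^ (g - n) * (g.choose n : R) * f n +
        ∑ n ∈ range (g + 1), c ^ (g - n) * (g.choose n : R) * f (n + 1) := by
  have hshift : c * ∑ n ∈ range (g + 1), c ^ (g - n) * (g.choose n : R) * f n =
      ∑ n ∈ range (g + 1), c ^ (g - n) * (g.choose (n + 1) : R) * f (n + 1) +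
        c ^ (g + 1) * f 0 := by
    rw [mul_sum, sum_range_succ', sum_range_succ, Nat.choose_succ_self, Nat.cast_zero, mul_zero,
      zero_mul, add_zero]
    refine congr_arg₂ _ (sum_congr rfl fun n hn => ?_) (by simp [pow_succ', mul_assoc])
    rw [show g - n = g - (n + 1) + 1 by have := mem_range.1 hn; omega, pow_succ]
    ring
  rw [hshift, sum_range_succ' _ (g + 1), add_right_comm, ← sum_add_distrib]
  refine congr_arg₂ _ (sum_congr rfl fun n _ => ?_) (by simp)
  rw [Nat.choose_succ_succ', Nat.cast_add, Nat.add_sub_add_right]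
  ring

lemma DP_succ_succ {p : ℕ} (hp : p ≠ 0) (g k : ℕ) :
    DP p (g + 1) (k + 1) = 2 * DP p g (k + 1) + DP p g k + DP p g (k + 2) := by
  rw [DP, sum_range_pow_mul_choose_succ, add_assoc, DP, DP, DP, ← sum_add_distrib]
  simp only [dP_succ_succ hp, mul_add]

lemma DP_zero_right (p g : ℕ) : DP p g 0 = 0 := by
  simp [DP, dP_zero_right]

lemma DP_self_right (p g : ℕ) : DP p g p = 0 := by
  simp [DP, dP_self_right]

lemma DP_zero_left (p k : ℕ) : DP p 0 k = dP p 0 k := by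
  simp [DP]

lemma DP_five_succ (g : ℕ) :
    DP 5 (g + 1) 1 = 2 * DP 5 g 1 + DP 5 g 2 ∧
    DP 5 (g + 1) 2 = 2 * DP 5 g 2 + DP 5 g 1 + DP 5 g 3 ∧
    DP 5 (g + 1) 3 = 2 * DP 5 g 3 + DP 5 g 2 + DP 5 g 4 ∧
    DP 5 (g + 1) 4 = 2 * DP 5 g 4 + DP 5 g 3 := by
  have h := DP_succ_succ (p := 5) (by norm_num) g
  refine ⟨?_, h 1, h 2, ?_⟩
  · simpa [DP_zero_right] using h 0
  · simpa [DP_self_right] using h 3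

lemma DP_five_zero_left : DP 5 0 1 = 1 ∧ DP 5 0 2 = 0 ∧ DP 5 0 3 = 0 ∧ DP 5 0 4 = 0 := by
  simp [DP_zero_left, dP_zero_left]

lemma DP_five_antisymmetric_part (g : ℕ) :
    DP 5 g 1 - DP 5 g 4 = Nat.fib (2 * g + 1) ∧ DP 5 g 2 - DP 5 g 3 = Nat.fib (2 * g) := by
  induction g with
  | zero =>
    obtain ⟨h1, h2, h3, h4⟩ := DP_five_zero_left
    simp [h1, h2, h3, h4]
  | succ g ih =>
    obtain ⟨h1, h2, h3, h4⟩ := DP_five_succ g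
    have hF2 : (Nat.fib (2 * g + 2) : ℤ) = Nat.fib (2 * g) + Nat.fib (2 * g + 1) := by
      exact_mod_cast Nat.fib_add_two
    have hF3 : (Nat.fib (2 * g + 3) : ℤ) = Nat.fib (2 * g + 1) + Nat.fib (2 * g + 2) := by
      exact_mod_cast Nat.fib_add_two
    rw [show 2 * (g + 1) = 2 * g + 2 by ring]
    constructor
    · linear_combination h1 - h4 + 2 * ih.1 + ih.2 - hF3 - hF2
    · linear_combination h2 - h3 + ih.1 + ih.2 - hF2

/-- `f_{2m+1} - f_{2m}` is `f_{2m-1}`, written this way so that the case `m = 0` holds as well. -/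
lemma DP_five_symmetric_part (m : ℕ) :
    DP 5 (2 * m) 1 + DP 5 (2 * m) 4 = 5 ^ m * ((Nat.fib (2 * m + 1) : ℤ) - Nat.fib (2 * m)) ∧
    DP 5 (2 * m) 2 + DP 5 (2 * m) 3 = 5 ^ m * Nat.fib (2 * m) := by
  induction m with
  | zero =>
    obtain ⟨h1, h2, h3, h4⟩ := DP_five_zero_left
    simp [h1, h2, h3, h4]
  | succ m ih =>
    obtain ⟨a1, a2, a3, a4⟩ := DP_five_succ (2 * m + 1)
    obtain ⟨b1, b2, b3, b4⟩ := DP_five_succ (2 * m)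
    have hF2 : (Nat.fib (2 * m + 2) : ℤ) = Nat.fib (2 * m) + Nat.fib (2 * m + 1) := by
      exact_mod_cast Nat.fib_add_two
    have hF3 : (Nat.fib (2 * m + 3) : ℤ) = Nat.fib (2 * m + 1) + Nat.fib (2 * m + 2) := by
      exact_mod_cast Nat.fib_add_two
    rw [show 2 * (m + 1) = 2 * m + 1 + 1 by ring]
    constructor
    · linear_combination a1 + a4 + 2 * b1 + 2 * b4 + b2 + b3 + 5 * ih.1 + 5 * ih.2
        - 5 ^ (m + 1) * hF3
    · linear_combination a2 + a3 + b1 + b4 + 3 * b2 + 3 * b3 + 5 * ih.1 + 10 * ih.2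
        - 5 ^ (m + 1) * hF2

/-- For every even `g ≥ 2`:
`2 D_5(g,1) = 5^{g/2} f_{g-1} + f_{2g+1}`, `2 D_5(g,2) = 5^{g/2} f_g + f_{2g}`,
`2 D_5(g,3) = 5^{g/2} f_g - f_{2g}`, `2 D_5(g,4) = 5^{g/2} f_{g-1} - f_{2g+1}`. -/
theorem DP_five_even (g : ℕ) (hg : 2 ≤ g) (hge : Even g) :
    2 * DP 5 g 1 = 5 ^ (g / 2) * (Nat.fib (g - 1) : ℤ) + (Nat.fib (2 * g + 1) : ℤ) ∧
    2 * DP 5 g 2 = 5 ^ (g / 2) * (Nat.fib g : ℤ) + (Nat.fib (2 * g) : ℤ) ∧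
    2 * DP 5 g 3 = 5 ^ (g / 2) * (Nat.fib g : ℤ) - (Nat.fib (2 * g) : ℤ) ∧
    2 * DP 5 g 4 = 5 ^ (g / 2) * (Nat.fib (g - 1) : ℤ) - (Nat.fib (2 * g + 1) : ℤ) := by
  obtain ⟨m, rfl⟩ : ∃ m, g = 2 * (m + 1) := ⟨g / 2 - 1, by obtain ⟨r, rfl⟩ := hge; omega⟩
  obtain ⟨a1, a2⟩ := DP_five_antisymmetric_part (2 * (m + 1))
  obtain ⟨s1, s2⟩ := DP_five_symmetric_part (m + 1)
  have hfib :
      (Nat.fib (2 * (m + 1) + 1) : ℤ) - Nat.fib (2 * (m + 1)) = Nat.fib (2 * (m + 1) - 1) := by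
    rw [show 2 * (m + 1) - 1 = 2 * m + 1 by omega, show 2 * (m + 1) + 1 = 2 * m + 1 + 2 by ring,
      Nat.fib_add_two, show 2 * m + 1 + 1 = 2 * (m + 1) by ring]
    push_cast
    ring
  rw [show 2 * (m + 1) / 2 = m + 1 by omega, ← hfib]
  exact ⟨by linear_combination s1 + a1, by linear_combination s2 + a2,
    by linear_combination s2 - a2, by linear_combination s1 - a1⟩
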